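/- arXiv:1810.04697 — 7 statements merged into one kernel-verified Lean document; each statement's English description precedes it below -/
import Mathlib

section
/- Let d ≥ 1, let Y ⊆ ℝ^d be a production set, let P ⊆ ℝ^d_{++} be a nonempty set of strictly positive price vectors, and suppose the profit function π(p) = sup_{y∈Y} p·y is finite for every p ∈ P. Define Ỹ = {y ∈ ℝ^d : p·y ≤ π(p) for all p ∈ P}. Then Ỹ is closed, convex, satisfies free disposal, contains Y, and satisfies sup_{y∈Ỹ} p·y = π(p) for every p ∈ P. -/
open scoped RealInnerProductSpace

/-- The strictly positive orthant of `ℝ^d`. -/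
def posOrthant (d : ℕ) : Set (EuclideanSpace ℝ (Fin d)) := {p | ∀ i, 0 < p i}

/-- Free disposal: anything componentwise below a feasible point is feasible. -/
def FreeDisposal {d : ℕ} (Y : Set (EuclideanSpace ℝ (Fin d))) : Prop :=
  ∀ y ∈ Y, ∀ y' : EuclideanSpace ℝ (Fin d), (∀ i, y' i ≤ y i) → y' ∈ Y

/-- Recession cone property: accumulation points of `y^m/‖y^m‖` along a norm-divergent
sequence in `Y` lie in the nonpositive orthant. -/
def RecessionConeProp {d : ℕ} (Y : Set (EuclideanSpace ℝ (Fin d))) : Prop :=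
  ∀ ym : ℕ → EuclideanSpace ℝ (Fin d), (∀ m, ym m ∈ Y) →
    Filter.Tendsto (fun m => ‖ym m‖) Filter.atTop Filter.atTop →
    ∀ z : EuclideanSpace ℝ (Fin d),
      MapClusterPt z Filter.atTop (fun m => ‖ym m‖⁻¹ • ym m) → ∀ i, z i ≤ 0

/-- A production set: nonempty, closed, convex, free disposal, recession cone property. -/
def IsProductionSet {d : ℕ} (Y : Set (EuclideanSpace ℝ (Fin d))) : Prop :=
  Y.Nonempty ∧ IsClosed Y ∧ Convex ℝ Y ∧ FreeDisposal Y ∧ RecessionConeProp Y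

section ProfitOuterSet

variable {E : Type*} [NormedAddCommGroup E] [InnerProductSpace ℝ E]

/-- The set `Ỹ` of the paper. -/
def profitOuterSet (P : Set E) (prof : E → ℝ) : Set E := {y | ∀ p ∈ P, ⟪p, y⟫ ≤ prof p}

variable {P Y : Set E} {prof : E → ℝ}

theorem profitOuterSet_eq_biInter (P : Set E) (prof : E → ℝ) :
    profitOuterSet P prof = ⋂ p ∈ P, {y | ⟪p, y⟫ ≤ prof p} := by
  ext y
  simp [profitOuterSet]

theorem isClosed_profitOuterSet (P : Set E) (prof : E → ℝ) : IsClosed (profitOuterSet P prof) := by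
  rw [profitOuterSet_eq_biInter]
  exact isClosed_biInter fun p _ => isClosed_le (continuous_const.inner continuous_id) continuous_const

theorem convex_profitOuterSet (P : Set E) (prof : E → ℝ) : Convex ℝ (profitOuterSet P prof) := by
  rw [profitOuterSet_eq_biInter]
  exact convex_iInter₂ fun p _ => convex_halfSpace_le (innerₛₗ ℝ p).isLinear (prof p)

theorem subset_profitOuterSet (hprof : ∀ p ∈ P, prof p ∈ upperBounds ((fun y => ⟪p, y⟫) '' Y)) :
    Y ⊆ profitOuterSet P prof :=
  fun y hy p hp => hprof p hp ⟨y, hy, rfl⟩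

theorem isLUB_image_profitOuterSet (hprof : ∀ p ∈ P, IsLUB ((fun y => ⟪p, y⟫) '' Y) (prof p))
    {p : E} (hp : p ∈ P) :
    IsLUB ((fun y => ⟪p, y⟫) '' profitOuterSet P prof) (prof p) := by
  refine ⟨?_, fun b hb => (hprof p hp).2 (upperBounds_mono_set ?_ hb)⟩
  · rintro _ ⟨y, hy, rfl⟩
    exact hy p hp
  · exact Set.image_mono (subset_profitOuterSet fun q hq => (hprof q hq).1)

end ProfitOuterSet

theorem EuclideanSpace.inner_le_inner_of_le {ι : Type*} [Fintype ι] {p y y' : EuclideanSpace ℝ ι}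
    (hp : ∀ i, 0 ≤ p i) (hy : ∀ i, y' i ≤ y i) : ⟪p, y'⟫ ≤ ⟪p, y⟫ := by
  simp only [PiLp.inner_apply, RCLike.inner_apply, conj_trivial]
  exact Finset.sum_le_sum fun i _ => mul_le_mul_of_nonneg_right (hy i) (hp i)

theorem freeDisposal_profitOuterSet {d : ℕ} {P : Set (EuclideanSpace ℝ (Fin d))}
    (hP : P ⊆ posOrthant d) (prof : EuclideanSpace ℝ (Fin d) → ℝ) :
    FreeDisposal (profitOuterSet P prof) :=
  fun _ hy _ hle p hp =>
    (EuclideanSpace.inner_le_inner_of_le (fun i => (hP hp i).le) hle).trans (hy p hp)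

theorem stmt0_general (d : ℕ) (Y : Set (EuclideanSpace ℝ (Fin d)))
    (P : Set (EuclideanSpace ℝ (Fin d))) (hPpos : P ⊆ posOrthant d)
    (prof : EuclideanSpace ℝ (Fin d) → ℝ)
    (hprof : ∀ p ∈ P, IsLUB ((fun y => ⟪p, y⟫) '' Y) (prof p)) :
    IsClosed {y : EuclideanSpace ℝ (Fin d) | ∀ p ∈ P, ⟪p, y⟫ ≤ prof p} ∧
    Convex ℝ {y : EuclideanSpace ℝ (Fin d) | ∀ p ∈ P, ⟪p, y⟫ ≤ prof p} ∧
    FreeDisposal {y : EuclideanSpace ℝ (Fin d) | ∀ p ∈ P, ⟪p, y⟫ ≤ prof p} ∧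
    Y ⊆ {y : EuclideanSpace ℝ (Fin d) | ∀ p ∈ P, ⟪p, y⟫ ≤ prof p} ∧
    ∀ p ∈ P,
      IsLUB ((fun y => ⟪p, y⟫) ''
        {y : EuclideanSpace ℝ (Fin d) | ∀ q ∈ P, ⟪q, y⟫ ≤ prof q}) (prof p) :=
  ⟨isClosed_profitOuterSet P prof, convex_profitOuterSet P prof,
    freeDisposal_profitOuterSet hPpos prof, subset_profitOuterSet fun p hp => (hprof p hp).1,
    fun _ hp => isLUB_image_profitOuterSet hprof hp⟩

/-- Theorem 5.1(i): the outer set `Ỹ` is closed, convex, satisfies free disposal,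
contains `Y`, and has the same profit function as `Y` on `P`. -/
theorem stmt0 (d : ℕ) (hd : 1 ≤ d) (Y : Set (EuclideanSpace ℝ (Fin d)))
    (hY : IsProductionSet Y)
    (P : Set (EuclideanSpace ℝ (Fin d))) (hPne : P.Nonempty) (hPpos : P ⊆ posOrthant d)
    (prof : EuclideanSpace ℝ (Fin d) → ℝ)
    (hprof : ∀ p ∈ P, IsLUB ((fun y => ⟪p, y⟫) '' Y) (prof p)) :
    IsClosed {y : EuclideanSpace ℝ (Fin d) | ∀ p ∈ P, ⟪p, y⟫ ≤ prof p} ∧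
    Convex ℝ {y : EuclideanSpace ℝ (Fin d) | ∀ p ∈ P, ⟪p, y⟫ ≤ prof p} ∧
    FreeDisposal {y : EuclideanSpace ℝ (Fin d) | ∀ p ∈ P, ⟪p, y⟫ ≤ prof p} ∧
    Y ⊆ {y : EuclideanSpace ℝ (Fin d) | ∀ p ∈ P, ⟪p, y⟫ ≤ prof p} ∧
    ∀ p ∈ P,
      IsLUB ((fun y => ⟪p, y⟫) ''
        {y : EuclideanSpace ℝ (Fin d) | ∀ q ∈ P, ⟪q, y⟫ ≤ prof q}) (prof p) :=
  stmt0_general d Y P hPpos prof hprof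
end

section
/- Let d ≥ 1 and let P ⊆ ℝ^d_{++} satisfy the rich-price condition: the interior of the closure of the cone ⋃_{λ>0}{λp : p ∈ P} equals ℝ^d_{++}. Let Y and Y′ be production sets such that sup_{y∈Y} p·y and sup_{y∈Y′} p·y are finite for every p ∈ ℝ^d_{++} (this finiteness follows from the recession cone property), and suppose sup_{y∈Y} p·y = sup_{y∈Y′} p·y for every p ∈ P. Then Y = Y′. -/
/-! The profit function of a production set is positively homogeneous and convex on the open
orthant, hence continuous there, so agreement on `P` spreads to the cone over `P` and then, by the
rich-price condition, to the whole orthant. Conversely, a closed convex set with free disposal is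
the intersection of the half-spaces `⟪p, y⟫ ≤ π p` over strictly positive prices `p`: a point
outside it is strictly separated by a price vector which free disposal forces to be nonnegative,
and perturbing that vector into the open orthant keeps the separation in the limit. -/

open scoped RealInnerProductSpace

open Set Filter Topology

section

variable {d : ℕ}

lemma isOpen_posOrthant : IsOpen (posOrthant d) := by
  simp only [posOrthant, ofPred_forall]
  exact isOpen_iInter_of_finite fun i =>
    isOpen_lt continuous_const (EuclideanSpace.proj i).continuous

lemma convex_posOrthant : Convex ℝ (posOrthant d) := by
  simp only [posOrthant, ofPred_forall]
  exact convex_iInter fun i => convex_halfSpace_gt (EuclideanSpace.proj i).isLinear 0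

lemma smul_mem_posOrthant {l : ℝ} (hl : 0 < l) {p : EuclideanSpace ℝ (Fin d)}
    (hp : p ∈ posOrthant d) : l • p ∈ posOrthant d :=
  fun i => mul_pos hl (hp i)

lemma add_smul_mem_posOrthant {p q : EuclideanSpace ℝ (Fin d)} (hp : ∀ i, 0 ≤ p i)
    (hq : q ∈ posOrthant d) {ε : ℝ} (hε : 0 < ε) : p + ε • q ∈ posOrthant d :=
  fun i => add_pos_of_nonneg_of_pos (hp i) (mul_pos hε (hq i))

lemma one_mem_posOrthant : (WithLp.toLp 2 fun _ => 1 : EuclideanSpace ℝ (Fin d)) ∈ posOrthant d :=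
  fun _ => one_pos

lemma FreeDisposal.nonneg_of_bddAbove_inner {Y : Set (EuclideanSpace ℝ (Fin d))}
    (hfd : FreeDisposal Y) (hne : Y.Nonempty) {p : EuclideanSpace ℝ (Fin d)}
    (hbdd : BddAbove ((fun y => ⟪p, y⟫) '' Y)) (i : Fin d) : 0 ≤ p i := by
  obtain ⟨y₀, hy₀⟩ := hne
  obtain ⟨M, hM⟩ := hbdd
  by_contra! hpi
  -- moving down along the `i`-th axis raises profit without bound when `p i < 0`
  set t := (M - ⟪p, y₀⟫ + 1) / -p i
  have ht : 0 ≤ t := div_nonneg (by linarith [hM ⟨y₀, hy₀, rfl⟩]) (by linarith)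
  have hmem : y₀ - t • EuclideanSpace.single i 1 ∈ Y := by
    refine hfd y₀ hy₀ _ fun j => ?_
    rcases eq_or_ne j i with rfl | hji
    · simp [ht]
    · simp [hji]
  have hval : ⟪p, y₀ - t • EuclideanSpace.single i 1⟫ = M + 1 := by
    have htp : t * -p i = M - ⟪p, y₀⟫ + 1 := div_mul_cancel₀ _ (by linarith)
    simp only [inner_sub_right, real_inner_smul_right, EuclideanSpace.inner_single_right,
      conj_trivial, one_mul]
    linarith [mul_neg t (p i)]
  linarith [hM ⟨_, hmem, hval⟩]

def IsProfitFunction (Y : Set (EuclideanSpace ℝ (Fin d))) (π : EuclideanSpace ℝ (Fin d) → ℝ) :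
    Prop :=
  ∀ p ∈ posOrthant d, IsLUB ((fun y => ⟪p, y⟫) '' Y) (π p)

section IsProfitFunction

variable {Y Y' : Set (EuclideanSpace ℝ (Fin d))} {π π' : EuclideanSpace ℝ (Fin d) → ℝ}

lemma IsProfitFunction.inner_le (h : IsProfitFunction Y π) {p y : EuclideanSpace ℝ (Fin d)}
    (hp : p ∈ posOrthant d) (hy : y ∈ Y) : ⟪p, y⟫ ≤ π p :=
  (h p hp).1 ⟨y, hy, rfl⟩

lemma IsProfitFunction.le_of_forall_inner_le (h : IsProfitFunction Y π)
    {p : EuclideanSpace ℝ (Fin d)} (hp : p ∈ posOrthant d) {b : ℝ} (hb : ∀ y ∈ Y, ⟪p, y⟫ ≤ b) :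
    π p ≤ b :=
  (h p hp).2 <| forall_mem_image.2 hb

lemma IsProfitFunction.map_smul (h : IsProfitFunction Y π) {l : ℝ} (hl : 0 < l)
    {p : EuclideanSpace ℝ (Fin d)} (hp : p ∈ posOrthant d) : π (l • p) = l * π p := by
  refine (h _ (smul_mem_posOrthant hl hp)).unique ?_
  simpa only [image_image, real_inner_smul_left] using (h p hp).mul_left hl.le

lemma IsProfitFunction.convexOn (h : IsProfitFunction Y π) : ConvexOn ℝ (posOrthant d) π := by
  refine ⟨convex_posOrthant, fun p hp q hq a b ha hb hab => ?_⟩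
  refine h.le_of_forall_inner_le (convex_posOrthant hp hq ha hb hab) fun y hy => ?_
  rw [inner_add_left, real_inner_smul_left, real_inner_smul_left, smul_eq_mul, smul_eq_mul]
  gcongr
  exacts [h.inner_le hp hy, h.inner_le hq hy]

lemma IsProfitFunction.continuousOn (h : IsProfitFunction Y π) :
    ContinuousOn π (posOrthant d) :=
  h.convexOn.continuousOn isOpen_posOrthant

lemma IsProfitFunction.eq_setOf_inner_le (h : IsProfitFunction Y π) (hne : Y.Nonempty)
    (hcl : IsClosed Y) (hconv : Convex ℝ Y) (hfd : FreeDisposal Y) :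
    Y = {y | ∀ p ∈ posOrthant d, ⟪p, y⟫ ≤ π p} := by
  refine Subset.antisymm (fun y hy p hp => h.inner_le hp hy) fun y hy => ?_
  by_contra hyY
  obtain ⟨f, u, hfY, hfy⟩ := geometric_hahn_banach_closed_point hconv hcl hyY
  set p := (InnerProductSpace.toDual ℝ (EuclideanSpace ℝ (Fin d))).symm f
  have hpf : ∀ z, ⟪p, z⟫ = f z := fun z => InnerProductSpace.toDual_symm_apply
  have hp : ∀ i, 0 ≤ p i := hfd.nonneg_of_bddAbove_inner hne
    ⟨u, forall_mem_image.2 fun z hz => (hpf z).trans_le (hfY z hz).le⟩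
  set one : EuclideanSpace ℝ (Fin d) := WithLp.toLp 2 fun _ => 1
  -- `p` itself may lie on the boundary of the orthant, so approach it by `p + ε • one`
  have hpert : ∀ ε > 0, ⟪p, y⟫ + ε * ⟪one, y⟫ ≤ u + ε * π one := fun ε hε => by
    have hpε := add_smul_mem_posOrthant hp one_mem_posOrthant hε
    calc ⟪p, y⟫ + ε * ⟪one, y⟫ = ⟪p + ε • one, y⟫ := by
          rw [inner_add_left, real_inner_smul_left]
      _ ≤ π (p + ε • one) := hy _ hpε
      _ ≤ u + ε * π one := h.le_of_forall_inner_le hpε fun z hz => by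
          rw [inner_add_left, real_inner_smul_left, hpf]
          gcongr
          exacts [(hfY z hz).le, h.inner_le one_mem_posOrthant hz]
  have hlim : Tendsto (fun ε => u + ε * π one - ε * ⟪one, y⟫) (𝓝[>] 0) (𝓝 u) := by
    refine tendsto_nhdsWithin_of_tendsto_nhds ?_
    exact (by fun_prop : Continuous fun ε : ℝ => u + ε * π one - ε * ⟪one, y⟫).tendsto' 0 u
      (by simp)
  have : ⟪p, y⟫ ≤ u := ge_of_tendsto hlim <| eventually_nhdsWithin_of_forall fun ε hε => by
    linarith [hpert ε hε]
  linarith [hpf y]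

variable {P : Set (EuclideanSpace ℝ (Fin d))}

lemma IsProfitFunction.eqOn_cone (h : IsProfitFunction Y π) (h' : IsProfitFunction Y' π')
    (hP : P ⊆ posOrthant d) (heq : EqOn π π' P) :
    EqOn π π' {q | ∃ l : ℝ, 0 < l ∧ ∃ p ∈ P, q = l • p} := by
  rintro _ ⟨l, hl, p, hp, rfl⟩
  rw [h.map_smul hl (hP hp), h'.map_smul hl (hP hp), heq hp]

lemma IsProfitFunction.eqOn_posOrthant (h : IsProfitFunction Y π) (h' : IsProfitFunction Y' π')
    (hP : P ⊆ posOrthant d)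
    (hrich : interior (closure {q | ∃ l : ℝ, 0 < l ∧ ∃ p ∈ P, q = l • p}) = posOrthant d)
    (heq : EqOn π π' P) : EqOn π π' (posOrthant d) := by
  refine (h.eqOn_cone h' hP heq).of_subset_closure h.continuousOn h'.continuousOn ?_
    (hrich ▸ interior_subset)
  rintro _ ⟨l, hl, p, hp, rfl⟩
  exact smul_mem_posOrthant hl (hP hp)

end IsProfitFunction

end

theorem stmt2_general (d : ℕ)
    (P : Set (EuclideanSpace ℝ (Fin d))) (hPpos : P ⊆ posOrthant d)
    (hrich : interior (closure {q : EuclideanSpace ℝ (Fin d) |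
        ∃ l : ℝ, 0 < l ∧ ∃ p ∈ P, q = l • p}) = posOrthant d)
    (Y Y' : Set (EuclideanSpace ℝ (Fin d)))
    (hY : IsProductionSet Y) (hY' : IsProductionSet Y')
    (profY profY' : EuclideanSpace ℝ (Fin d) → ℝ)
    (hprofY : ∀ p ∈ posOrthant d, IsLUB ((fun y => ⟪p, y⟫) '' Y) (profY p))
    (hprofY' : ∀ p ∈ posOrthant d, IsLUB ((fun y => ⟪p, y⟫) '' Y') (profY' p))
    (heq : ∀ p ∈ P, profY p = profY' p) :
    Y = Y' := by
  have hπ : IsProfitFunction Y profY := hprofY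
  have hπ' : IsProfitFunction Y' profY' := hprofY'
  have hagree := hπ.eqOn_posOrthant hπ' hPpos hrich heq
  obtain ⟨hne, hcl, hconv, hfd, -⟩ := hY
  obtain ⟨hne', hcl', hconv', hfd', -⟩ := hY'
  calc Y = {y | ∀ p ∈ posOrthant d, ⟪p, y⟫ ≤ profY p} :=
        hπ.eq_setOf_inner_le hne hcl hconv hfd
    _ = {y | ∀ p ∈ posOrthant d, ⟪p, y⟫ ≤ profY' p} :=
        ext fun y => forall₂_congr fun p hp => by rw [hagree hp]
    _ = Y' := (hπ'.eq_setOf_inner_le hne' hcl' hconv' hfd').symm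

/-- Theorem 5.1(iii): under the rich-price condition, two production sets with finite
profit functions agreeing on `P` coincide. -/
theorem stmt2 (d : ℕ) (hd : 1 ≤ d)
    (P : Set (EuclideanSpace ℝ (Fin d))) (hPpos : P ⊆ posOrthant d)
    (hrich : interior (closure {q : EuclideanSpace ℝ (Fin d) |
        ∃ l : ℝ, 0 < l ∧ ∃ p ∈ P, q = l • p}) = posOrthant d)
    (Y Y' : Set (EuclideanSpace ℝ (Fin d)))
    (hY : IsProductionSet Y) (hY' : IsProductionSet Y')
    (profY profY' : EuclideanSpace ℝ (Fin d) → ℝ)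
    (hprofY : ∀ p ∈ posOrthant d, IsLUB ((fun y => ⟪p, y⟫) '' Y) (profY p))
    (hprofY' : ∀ p ∈ posOrthant d, IsLUB ((fun y => ⟪p, y⟫) '' Y') (profY' p))
    (heq : ∀ p ∈ P, profY p = profY' p) :
    Y = Y' :=
  stmt2_general d P hPpos hrich Y Y' hY hY' profY profY' hprofY hprofY' heq
end

section
/- Let d ≥ 1, let P be a finite subset of the unit sphere intersected with ℝ^d_{++}, let π : P → ℝ, and let (y_p)_{p∈P} be a family of vectors in ℝ^d. Then there exists a production set Y* such that, for every p ∈ P, y_p ∈ Y*, p·y_p = sup_{y∈Y*} p·y, and sup_{y∈Y*} p·y = π(p), if and only if the following two conditions hold: (a) p·y_p = π(p) for every p ∈ P, and (b) p*·y_{p*} ≥ p*·y_p for every p, p* ∈ P. Moreover, in the sufficiency direction one may take Y* to be the free-disposal convex hull conv({y_p : p ∈ P}) + ℝ^d_{−}, which is nonempty, closed, convex, satisfies free disposal, and has finite support function at every strictly positive price. -/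
open scoped RealInnerProductSpace Pointwise

/-- The nonpositive orthant of `ℝ^d`. -/
def negOrthant (d : ℕ) : Set (EuclideanSpace ℝ (Fin d)) := {y | ∀ i, y i ≤ 0}

/-!
Necessity: profit-maximality of `y_{p*}` at `p*`, tested against the feasible `y_p`, is the weak
axiom. Sufficiency: by the weak axiom `p ⬝ y_p` bounds `p` on every `y_q`, hence on their convex
hull, and since `p ≥ 0` the nonpositive orthant only lowers profits. The free-disposal hull is
closed as a compact plus a closed set, and it has the recession cone property because each of its
coordinates is bounded above.
-/

open Filter Topology

lemma isClosed_negOrthant (d : ℕ) : IsClosed (negOrthant d) := by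
  simp only [negOrthant, Set.ofPred_forall]
  exact isClosed_iInter fun i => isClosed_le (EuclideanSpace.proj i).continuous continuous_const

lemma convex_negOrthant (d : ℕ) : Convex ℝ (negOrthant d) := by
  simp only [negOrthant, Set.ofPred_forall]
  exact convex_iInter fun i => convex_halfSpace_le (EuclideanSpace.proj i).toLinearMap.isLinear 0

lemma inner_nonpos_of_mem_negOrthant {d : ℕ} {p y : EuclideanSpace ℝ (Fin d)}
    (hp : ∀ i, 0 ≤ p i) (hy : y ∈ negOrthant d) : ⟪p, y⟫ ≤ 0 := by
  rw [PiLp.inner_apply]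
  exact Finset.sum_nonpos fun i _ => mul_nonpos_of_nonpos_of_nonneg (hy i) (hp i)

lemma freeDisposal_add_negOrthant {d : ℕ} (S : Set (EuclideanSpace ℝ (Fin d))) :
    FreeDisposal (S + negOrthant d) := by
  rintro _ ⟨c, hc, n, hn, rfl⟩ y hy
  refine ⟨c, hc, y - c, fun i => ?_, add_sub_cancel c y⟩
  have hyi : y i ≤ c i + n i := hy i
  have hni : n i ≤ 0 := hn i
  simp only [PiLp.sub_apply]
  linarith

lemma recessionConeProp_of_bddAbove_coord {d : ℕ} {Y : Set (EuclideanSpace ℝ (Fin d))}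
    (hY : ∀ i, BddAbove ((fun y => y i) '' Y)) : RecessionConeProp Y := by
  intro ym hym htend z hz i
  obtain ⟨M, hM⟩ := hY i
  refine le_of_forall_pos_le_add fun ε hε => ?_
  have hsmall : ∀ᶠ m in atTop, ‖ym m‖⁻¹ * M < ε := by
    have h : Tendsto (fun m => ‖ym m‖⁻¹ * M) atTop (𝓝 0) := by
      simpa using (tendsto_inv_atTop_zero.comp htend).mul_const M
    exact h.eventually (gt_mem_nhds hε)
  have hclosed : IsClosed {x : EuclideanSpace ℝ (Fin d) | x i ≤ 0 + ε} :=
    isClosed_le (EuclideanSpace.proj i).continuous continuous_const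
  refine hclosed.mem_of_mapClusterPt hz ?_
  filter_upwards [hsmall, htend.eventually_gt_atTop 0] with m hm hpos
  have hle := mul_le_mul_of_nonneg_left (hM (Set.mem_image_of_mem _ (hym m)))
    (inv_nonneg.2 hpos.le)
  show ‖ym m‖⁻¹ * ym m i ≤ 0 + ε
  linarith

section ConvexHullAdd

variable {E : Type*} [AddCommGroup E] [Module ℝ E] (f : E →ₗ[ℝ] ℝ) {s t : Set E}

lemma LinearMap.le_of_mem_convexHull_add {B : ℝ} (hs : ∀ x ∈ s, f x ≤ B)
    (ht : ∀ x ∈ t, f x ≤ 0) {y : E} (hy : y ∈ convexHull ℝ s + t) : f y ≤ B := by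
  obtain ⟨c, hc, n, hn, rfl⟩ := hy
  have hc' : f c ≤ B := convexHull_min hs (convex_halfSpace_le f.isLinear B) hc
  simpa using add_le_add hc' (ht n hn)

lemma LinearMap.bddAbove_image_convexHull_add (hs : s.Finite) (ht : ∀ x ∈ t, f x ≤ 0) :
    BddAbove (f '' (convexHull ℝ s + t)) := by
  obtain ⟨B, hB⟩ := (hs.image f).bddAbove
  exact ⟨B, Set.forall_mem_image.2 fun y hy =>
    f.le_of_mem_convexHull_add (fun x hx => hB (Set.mem_image_of_mem f hx)) ht hy⟩

end ConvexHullAdd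

section FreeDisposalHull

variable {d : ℕ} {S : Set (EuclideanSpace ℝ (Fin d))}

def freeDisposalHull (S : Set (EuclideanSpace ℝ (Fin d))) : Set (EuclideanSpace ℝ (Fin d)) :=
  convexHull ℝ S + negOrthant d

lemma subset_freeDisposalHull : S ⊆ freeDisposalHull S :=
  fun y hy => ⟨y, subset_convexHull ℝ S hy, 0, fun _ => le_rfl, add_zero y⟩

lemma inner_le_of_mem_freeDisposalHull {p : EuclideanSpace ℝ (Fin d)} (hp : ∀ i, 0 ≤ p i)
    {B : ℝ} (hB : ∀ x ∈ S, ⟪p, x⟫ ≤ B) {y : EuclideanSpace ℝ (Fin d)}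
    (hy : y ∈ freeDisposalHull S) : ⟪p, y⟫ ≤ B :=
  (innerₗ _ p).le_of_mem_convexHull_add hB (fun _ hn => inner_nonpos_of_mem_negOrthant hp hn) hy

lemma bddAbove_inner_image_freeDisposalHull (hS : S.Finite) {p : EuclideanSpace ℝ (Fin d)}
    (hp : ∀ i, 0 ≤ p i) : BddAbove ((fun y => ⟪p, y⟫) '' freeDisposalHull S) :=
  (innerₗ _ p).bddAbove_image_convexHull_add hS fun _ hn => inner_nonpos_of_mem_negOrthant hp hn

lemma isClosed_freeDisposalHull (hS : S.Finite) : IsClosed (freeDisposalHull S) := by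
  rw [freeDisposalHull, add_comm]
  exact (isClosed_negOrthant d).add_right_of_isCompact (hS.isCompact_convexHull ℝ)

lemma isProductionSet_freeDisposalHull (hS : S.Finite) (hne : S.Nonempty) :
    IsProductionSet (freeDisposalHull S) :=
  ⟨hne.mono subset_freeDisposalHull, isClosed_freeDisposalHull hS,
    (convex_convexHull ℝ S).add (convex_negOrthant d), freeDisposal_add_negOrthant _,
    recessionConeProp_of_bddAbove_coord fun i =>
      (EuclideanSpace.proj i).toLinearMap.bddAbove_image_convexHull_add hS fun _ hn => hn i⟩

end FreeDisposalHull

theorem stmt4_general (d : ℕ)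
    (P : Set (EuclideanSpace ℝ (Fin d))) (hPfin : P.Finite) (hPne : P.Nonempty)
    (hPpos : P ⊆ posOrthant d)
    (prof : EuclideanSpace ℝ (Fin d) → ℝ)
    (yp : EuclideanSpace ℝ (Fin d) → EuclideanSpace ℝ (Fin d)) :
    ((∃ Ystar : Set (EuclideanSpace ℝ (Fin d)), IsProductionSet Ystar ∧
        ∀ p ∈ P, yp p ∈ Ystar ∧ (∀ y ∈ Ystar, ⟪p, y⟫ ≤ ⟪p, yp p⟫) ∧ ⟪p, yp p⟫ = prof p) ↔
      ((∀ p ∈ P, ⟪p, yp p⟫ = prof p) ∧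
        ∀ p ∈ P, ∀ pstar ∈ P, ⟪pstar, yp p⟫ ≤ ⟪pstar, yp pstar⟫)) ∧
    (((∀ p ∈ P, ⟪p, yp p⟫ = prof p) ∧
        ∀ p ∈ P, ∀ pstar ∈ P, ⟪pstar, yp p⟫ ≤ ⟪pstar, yp pstar⟫) →
      (convexHull ℝ (yp '' P) + negOrthant d).Nonempty ∧
      IsClosed (convexHull ℝ (yp '' P) + negOrthant d) ∧
      Convex ℝ (convexHull ℝ (yp '' P) + negOrthant d) ∧
      FreeDisposal (convexHull ℝ (yp '' P) + negOrthant d) ∧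
      (∀ p ∈ posOrthant d,
        BddAbove ((fun y => ⟪p, y⟫) '' (convexHull ℝ (yp '' P) + negOrthant d))) ∧
      ∀ p ∈ P, yp p ∈ convexHull ℝ (yp '' P) + negOrthant d ∧
        (∀ y ∈ convexHull ℝ (yp '' P) + negOrthant d, ⟪p, y⟫ ≤ ⟪p, yp p⟫) ∧
        ⟪p, yp p⟫ = prof p) := by
  have hfin : (yp '' P).Finite := hPfin.image yp
  have hprod := isProductionSet_freeDisposalHull hfin (hPne.image yp)
  have hrationalizes : ((∀ p ∈ P, ⟪p, yp p⟫ = prof p) ∧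
      ∀ p ∈ P, ∀ pstar ∈ P, ⟪pstar, yp p⟫ ≤ ⟪pstar, yp pstar⟫) →
      ∀ p ∈ P, yp p ∈ freeDisposalHull (yp '' P) ∧
        (∀ y ∈ freeDisposalHull (yp '' P), ⟪p, y⟫ ≤ ⟪p, yp p⟫) ∧
        ⟪p, yp p⟫ = prof p := by
    rintro ⟨hprof, hwapm⟩ p hp
    refine ⟨subset_freeDisposalHull (Set.mem_image_of_mem yp hp), fun y hy => ?_, hprof p hp⟩
    refine inner_le_of_mem_freeDisposalHull (fun i => (hPpos hp i).le) ?_ hy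
    rintro _ ⟨q, hq, rfl⟩
    exact hwapm q hq p hp
  refine ⟨⟨?_, fun h => ⟨_, hprod, hrationalizes h⟩⟩, fun h => ?_⟩
  · rintro ⟨Y, -, hY⟩
    exact ⟨fun p hp => (hY p hp).2.2, fun p hp pstar hpstar =>
      (hY pstar hpstar).2.1 _ (hY p hp).1⟩
  · obtain ⟨hne, hclosed, hconvex, hfree, -⟩ := hprod
    exact ⟨hne, hclosed, hconvex, hfree,
      fun p hp => bddAbove_inner_image_freeDisposalHull hfin fun i => (hp i).le, hrationalizes h⟩

/-- Proposition 6.1: rationalizability of candidate supply vectors by a production set,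
characterized by the weak axiom of profit maximization; moreover the free-disposal convex
hull of the supply vectors works in the sufficiency direction. -/
theorem stmt4 (d : ℕ) (hd : 1 ≤ d)
    (P : Set (EuclideanSpace ℝ (Fin d))) (hPfin : P.Finite) (hPne : P.Nonempty)
    (hPsph : ∀ p ∈ P, ‖p‖ = 1) (hPpos : P ⊆ posOrthant d)
    (prof : EuclideanSpace ℝ (Fin d) → ℝ)
    (yp : EuclideanSpace ℝ (Fin d) → EuclideanSpace ℝ (Fin d)) :
    ((∃ Ystar : Set (EuclideanSpace ℝ (Fin d)), IsProductionSet Ystar ∧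
        ∀ p ∈ P, yp p ∈ Ystar ∧ (∀ y ∈ Ystar, ⟪p, y⟫ ≤ ⟪p, yp p⟫) ∧ ⟪p, yp p⟫ = prof p) ↔
      ((∀ p ∈ P, ⟪p, yp p⟫ = prof p) ∧
        ∀ p ∈ P, ∀ pstar ∈ P, ⟪pstar, yp p⟫ ≤ ⟪pstar, yp pstar⟫)) ∧
    (((∀ p ∈ P, ⟪p, yp p⟫ = prof p) ∧
        ∀ p ∈ P, ∀ pstar ∈ P, ⟪pstar, yp p⟫ ≤ ⟪pstar, yp pstar⟫) →
      (convexHull ℝ (yp '' P) + negOrthant d).Nonempty ∧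
      IsClosed (convexHull ℝ (yp '' P) + negOrthant d) ∧
      Convex ℝ (convexHull ℝ (yp '' P) + negOrthant d) ∧
      FreeDisposal (convexHull ℝ (yp '' P) + negOrthant d) ∧
      (∀ p ∈ posOrthant d,
        BddAbove ((fun y => ⟪p, y⟫) '' (convexHull ℝ (yp '' P) + negOrthant d))) ∧
      ∀ p ∈ P, yp p ∈ convexHull ℝ (yp '' P) + negOrthant d ∧
        (∀ y ∈ convexHull ℝ (yp '' P) + negOrthant d, ⟪p, y⟫ ≤ ⟪p, yp p⟫) ∧
        ⟪p, yp p⟫ = prof p) :=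
  stmt4_general d P hPfin hPne hPpos prof yp
end

section
/- Let d ≥ 2, let P̄ be a closed subset of the unit sphere S^{d−1} in ℝ^d such that C = {λp : λ > 0, p ∈ P̄} ∪ {0} is a closed convex cone, and let a : ℝ^d → ℝ be convex and positively homogeneous of degree 1. Define A = {y ∈ ℝ^d : p·y ≤ a(p) for all p ∈ P̄}, and assume A is nonempty and the polar cone of P̄ contains a nonzero vector. Then the support function h_A(u) = sup_{y∈A} u·y satisfies: h_A(u) = a(u) for every u ∈ P̄, and h_A(u) = +∞ for every u ∈ S^{d−1} \ P̄. -/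
/-!
For `u ∈ P̄` the constraint indexed by `u` itself gives `h_A(u) ≤ a(u)`. Conversely `a` is sublinear,
so by Hahn–Banach the linear functional `t u ↦ t a(u)` on `ℝ u` extends to a linear functional
`⟪·, y⟫ ≤ a`; this `y` lies in `A` and attains `⟪u, y⟫ = a(u)`.

A unit vector `u ∉ P̄` does not lie in the closed convex cone `C` spanned by `P̄`, so Farkas' lemma
gives `v` in the polar cone of `C` with `⟪u, v⟫ > 0`. Then `A` contains the ray `y₀ + t v`
(`t ≥ 0`) through any `y₀ ∈ A`, along which `⟪u, ·⟫` is unbounded.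
-/

open scoped RealInnerProductSpace

section Sublinear

variable {E : Type*} [AddCommGroup E] [Module ℝ E]

theorem map_zero_of_posHomogeneous {a : E → ℝ}
    (hhom : ∀ p : E, ∀ l : ℝ, 0 < l → a (l • p) = l * a p) : a 0 = 0 := by
  have h := hhom 0 2 two_pos
  rw [smul_zero] at h
  linarith

theorem ConvexOn.map_add_le_of_posHomogeneous {a : E → ℝ} (hconv : ConvexOn ℝ Set.univ a)
    (hhom : ∀ p : E, ∀ l : ℝ, 0 < l → a (l • p) = l * a p) (x y : E) :
    a (x + y) ≤ a x + a y := by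
  have hmid := hconv.2 (Set.mem_univ x) (Set.mem_univ y) (by norm_num : (0 : ℝ) ≤ 1 / 2)
    (by norm_num : (0 : ℝ) ≤ 1 / 2) (by norm_num)
  have hscale : a (x + y) = 2 * a ((1 / 2 : ℝ) • x + (1 / 2 : ℝ) • y) := by
    rw [← smul_add, hhom _ _ (by norm_num)]
    ring
  simp only [smul_eq_mul] at hmid
  linarith

theorem ConvexOn.mul_le_map_smul_of_posHomogeneous {a : E → ℝ} (hconv : ConvexOn ℝ Set.univ a)
    (hhom : ∀ p : E, ∀ l : ℝ, 0 < l → a (l • p) = l * a p) (u : E) (c : ℝ) :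
    c * a u ≤ a (c • u) := by
  rcases lt_trichotomy c 0 with hc | rfl | hc
  · have hsum : 0 ≤ a u + a (-u) := by
      simpa [map_zero_of_posHomogeneous hhom] using hconv.map_add_le_of_posHomogeneous hhom u (-u)
    have hneg : a (c • u) = -c * a (-u) := by
      rw [← hhom _ _ (neg_pos.2 hc), smul_neg, neg_smul, neg_neg]
    nlinarith
  · simp [map_zero_of_posHomogeneous hhom]
  · rw [hhom _ _ hc]

theorem ConvexOn.exists_linearMap_le_eq_of_posHomogeneous {a : E → ℝ}
    (hconv : ConvexOn ℝ Set.univ a) (hhom : ∀ p : E, ∀ l : ℝ, 0 < l → a (l • p) = l * a p)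
    (u : E) : ∃ g : E →ₗ[ℝ] ℝ, (∀ x, g x ≤ a x) ∧ g u = a u := by
  have hker : ∀ c : ℝ, c • u = 0 → (RingHom.id ℝ) c • a u = 0 := by
    intro c hcu
    rcases smul_eq_zero.1 hcu with rfl | rfl
    · simp
    · simp [map_zero_of_posHomogeneous hhom]
  let f := LinearPMap.mkSpanSingleton' u (a u) hker
  have hf : ∀ x : f.domain, f x ≤ a x := by
    rintro ⟨x, hx⟩
    obtain ⟨c, rfl⟩ := Submodule.mem_span_singleton.1 hx
    rw [LinearPMap.mkSpanSingleton'_apply]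
    exact hconv.mul_le_map_smul_of_posHomogeneous hhom u c
  obtain ⟨g, hgf, hga⟩ := exists_extension_of_le_sublinear f a (fun c hc x => hhom x c hc)
    (hconv.map_add_le_of_posHomogeneous hhom) hf
  exact ⟨g, hga, (hgf (⟨u, Submodule.mem_span_singleton_self u⟩ : ℝ ∙ u)).trans
    (LinearPMap.mkSpanSingleton'_apply_self _ _ _ _)⟩

end Sublinear

section InnerProductSpace

variable {E : Type*} [NormedAddCommGroup E] [InnerProductSpace ℝ E]

theorem ConvexOn.exists_inner_le_eq_of_posHomogeneous [FiniteDimensional ℝ E] {a : E → ℝ}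
    (hconv : ConvexOn ℝ Set.univ a) (hhom : ∀ p : E, ∀ l : ℝ, 0 < l → a (l • p) = l * a p)
    (u : E) : ∃ y : E, (∀ x, ⟪x, y⟫ ≤ a x) ∧ ⟪u, y⟫ = a u := by
  have := FiniteDimensional.complete ℝ E
  obtain ⟨g, hga, hgu⟩ := hconv.exists_linearMap_le_eq_of_posHomogeneous hhom u
  set y := (InnerProductSpace.toDual ℝ E).symm (LinearMap.toContinuousLinearMap g)
  have hy : ∀ x, ⟪x, y⟫ = g x := fun x => by
    rw [real_inner_comm, InnerProductSpace.toDual_symm_apply]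
    rfl
  exact ⟨y, fun x => hy x ▸ hga x, hy u ▸ hgu⟩

theorem exists_inner_pos_of_notMem_of_convex_of_isClosed [CompleteSpace E] {C : Set E}
    (hconv : Convex ℝ C) (hclosed : IsClosed C) (hne : C.Nonempty)
    (hsmul : ∀ c : ℝ, 0 < c → ∀ x ∈ C, c • x ∈ C) {u : E} (hu : u ∉ C) :
    ∃ v : E, (∀ x ∈ C, ⟪x, v⟫ ≤ 0) ∧ 0 < ⟪u, v⟫ := by
  let K : ConvexCone ℝ E :=
    { carrier := C
      smul_mem' := fun c hc x hx => hsmul c hc x hx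
      add_mem' := fun x hx y hy => by
        have hmid := hconv hx hy (by norm_num : (0 : ℝ) ≤ 1 / 2) (by norm_num : (0 : ℝ) ≤ 1 / 2)
          (by norm_num)
        convert hsmul 2 two_pos _ hmid using 1
        rw [smul_add, smul_smul, smul_smul]
        norm_num }
  lift K to ProperCone ℝ E using ⟨hne, hclosed⟩ with K' hK'
  have hmem : ∀ x, x ∈ K' ↔ x ∈ C := fun x => by
    rw [show x ∈ C ↔ x ∈ K from Iff.rfl, ← hK']
    rfl
  obtain ⟨y, hyK, hyu⟩ := K'.hyperplane_separation' (x₀ := u) ((hmem u).not.2 hu)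
  exact ⟨-y, fun x hx => by simpa [inner_neg_right] using hyK x ((hmem x).2 hx),
    by simpa [inner_neg_right] using hyu⟩

end InnerProductSpace

section Support

variable {E : Type*} [NormedAddCommGroup E] [InnerProductSpace ℝ E]

noncomputable def supportFunction (A : Set E) (u : E) : EReal :=
  ⨆ y ∈ A, ((⟪u, y⟫ : ℝ) : EReal)

theorem supportFunction_eq_of_le_of_mem {A : Set E} {u y₀ : E} {b : ℝ}
    (hle : ∀ y ∈ A, ⟪u, y⟫ ≤ b) (hy₀ : y₀ ∈ A) (hb : ⟪u, y₀⟫ = b) :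
    supportFunction A u = b :=
  le_antisymm (iSup₂_le fun y hy => EReal.coe_le_coe (hle y hy))
    (le_iSup₂_of_le y₀ hy₀ (EReal.coe_le_coe hb.ge))

theorem supportFunction_eq_top_of_ray {A : Set E} {u y₀ v : E}
    (hray : ∀ t : ℝ, 0 ≤ t → y₀ + t • v ∈ A) (huv : 0 < ⟪u, v⟫) :
    supportFunction A u = ⊤ := by
  refine EReal.eq_top_iff_forall_lt _ |>.2 fun r => ?_
  set t := max 0 ((r - ⟪u, y₀⟫ + 1) / ⟪u, v⟫)
  have ht : r - ⟪u, y₀⟫ + 1 ≤ t * ⟪u, v⟫ := (div_le_iff₀ huv).1 (le_max_right _ _)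
  refine lt_of_lt_of_le ?_ (le_iSup₂_of_le (y₀ + t • v) (hray t (le_max_left _ _)) le_rfl)
  rw [inner_add_right, inner_smul_right]
  exact EReal.coe_lt_coe (by linarith)

def halfspaceInter (P : Set E) (a : E → ℝ) : Set E :=
  {y | ∀ p ∈ P, ⟪p, y⟫ ≤ a p}

theorem add_smul_mem_halfspaceInter {P : Set E} {a : E → ℝ} {y v : E}
    (hy : y ∈ halfspaceInter P a) (hv : ∀ p ∈ P, ⟪p, v⟫ ≤ 0) {t : ℝ} (ht : 0 ≤ t) :
    y + t • v ∈ halfspaceInter P a := fun p hp => by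
  rw [inner_add_right, inner_smul_right]
  nlinarith [hy p hp, hv p hp]

theorem supportFunction_halfspaceInter_of_mem [FiniteDimensional ℝ E] {P : Set E} {a : E → ℝ}
    (hconv : ConvexOn ℝ Set.univ a) (hhom : ∀ p : E, ∀ l : ℝ, 0 < l → a (l • p) = l * a p)
    {u : E} (hu : u ∈ P) : supportFunction (halfspaceInter P a) u = a u := by
  obtain ⟨y₀, hy₀, hu₀⟩ := hconv.exists_inner_le_eq_of_posHomogeneous hhom u
  exact supportFunction_eq_of_le_of_mem (fun y hy => hy u hu) (fun p _ => hy₀ p) hu₀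

theorem supportFunction_halfspaceInter_eq_top [CompleteSpace E] {P C : Set E} {a : E → ℝ}
    (hconv : Convex ℝ C) (hclosed : IsClosed C) (hne : C.Nonempty)
    (hsmul : ∀ c : ℝ, 0 < c → ∀ x ∈ C, c • x ∈ C) (hPC : P ⊆ C) {u : E} (hu : u ∉ C)
    (hA : (halfspaceInter P a).Nonempty) : supportFunction (halfspaceInter P a) u = ⊤ := by
  obtain ⟨v, hvC, huv⟩ := exists_inner_pos_of_notMem_of_convex_of_isClosed hconv hclosed hne hsmul hu
  obtain ⟨y₀, hy₀⟩ := hA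
  exact supportFunction_eq_top_of_ray
    (fun t ht => add_smul_mem_halfspaceInter hy₀ (fun p hp => hvC p (hPC hp)) ht) huv

end Support

section ConeOver

variable {E : Type*} [AddCommGroup E] [Module ℝ E]

def coneOver (P : Set E) : Set E :=
  {q | ∃ l : ℝ, 0 < l ∧ ∃ p ∈ P, q = l • p} ∪ {0}

theorem subset_coneOver (P : Set E) : P ⊆ coneOver P :=
  fun p hp => Or.inl ⟨1, one_pos, p, hp, (one_smul ℝ p).symm⟩

theorem smul_mem_coneOver {P : Set E} {c : ℝ} (hc : 0 < c) {q : E} (hq : q ∈ coneOver P) :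
    c • q ∈ coneOver P := by
  rcases hq with ⟨l, hl, p, hp, rfl⟩ | rfl
  · exact Or.inl ⟨c * l, mul_pos hc hl, p, hp, (mul_smul c l p).symm⟩
  · exact Or.inr (smul_zero c)

theorem mem_of_mem_coneOver_of_norm_eq_one {E : Type*} [NormedAddCommGroup E] [NormedSpace ℝ E]
    {P : Set E} (hP : ∀ p ∈ P, ‖p‖ = 1) {u : E}
    (hu : ‖u‖ = 1) (huP : u ∈ coneOver P) : u ∈ P := by
  rcases huP with ⟨l, hl, p, hp, rfl⟩ | rfl
  · rw [norm_smul, hP p hp, mul_one, Real.norm_of_nonneg hl.le] at hu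
    rwa [hu, one_smul]
  · simp at hu

end ConeOver

theorem stmt8_general (d : ℕ)
    (Pb : Set (EuclideanSpace ℝ (Fin d)))
    (hPbsph : ∀ p ∈ Pb, ‖p‖ = 1)
    (hCclosed : IsClosed ({q : EuclideanSpace ℝ (Fin d) |
        ∃ l : ℝ, 0 < l ∧ ∃ p ∈ Pb, q = l • p} ∪ {0}))
    (hCconv : Convex ℝ ({q : EuclideanSpace ℝ (Fin d) |
        ∃ l : ℝ, 0 < l ∧ ∃ p ∈ Pb, q = l • p} ∪ {0}))
    (a : EuclideanSpace ℝ (Fin d) → ℝ)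
    (haconv : ConvexOn ℝ Set.univ a)
    (hahom : ∀ p : EuclideanSpace ℝ (Fin d), ∀ l : ℝ, 0 < l → a (l • p) = l * a p)
    (hAne : {y : EuclideanSpace ℝ (Fin d) | ∀ p ∈ Pb, ⟪p, y⟫ ≤ a p}.Nonempty) :
    (∀ u ∈ Pb,
      (⨆ y ∈ {y : EuclideanSpace ℝ (Fin d) | ∀ p ∈ Pb, ⟪p, y⟫ ≤ a p},
        ((⟪u, y⟫ : ℝ) : EReal)) = (a u : EReal)) ∧
    (∀ u : EuclideanSpace ℝ (Fin d), ‖u‖ = 1 → u ∉ Pb →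
      (⨆ y ∈ {y : EuclideanSpace ℝ (Fin d) | ∀ p ∈ Pb, ⟪p, y⟫ ≤ a p},
        ((⟪u, y⟫ : ℝ) : EReal)) = ⊤) :=
  ⟨fun _ hu => supportFunction_halfspaceInter_of_mem haconv hahom hu,
    fun _ hnorm hu => supportFunction_halfspaceInter_eq_top (C := coneOver Pb) hCconv hCclosed
      ⟨0, Or.inr rfl⟩ (fun _ hc _ => smul_mem_coneOver hc) (subset_coneOver Pb)
      (fun huC => hu (mem_of_mem_coneOver_of_norm_eq_one hPbsph hnorm huC)) hAne⟩

/-- Lemma A.1 (polar-cone lemma): the support function of the half-space intersection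
`A = {y : p·y ≤ a(p) for p ∈ P̄}` equals `a` on `P̄` and is `+∞` on the rest of the
unit sphere, provided the cone generated by `P̄` (with `0`) is a closed convex cone and
the polar cone of `P̄` contains a nonzero vector. -/
theorem stmt8 (d : ℕ) (hd : 2 ≤ d)
    (Pb : Set (EuclideanSpace ℝ (Fin d))) (hPbclosed : IsClosed Pb)
    (hPbsph : ∀ p ∈ Pb, ‖p‖ = 1)
    (hCclosed : IsClosed ({q : EuclideanSpace ℝ (Fin d) |
        ∃ l : ℝ, 0 < l ∧ ∃ p ∈ Pb, q = l • p} ∪ {0}))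
    (hCconv : Convex ℝ ({q : EuclideanSpace ℝ (Fin d) |
        ∃ l : ℝ, 0 < l ∧ ∃ p ∈ Pb, q = l • p} ∪ {0}))
    (a : EuclideanSpace ℝ (Fin d) → ℝ)
    (haconv : ConvexOn ℝ Set.univ a)
    (hahom : ∀ p : EuclideanSpace ℝ (Fin d), ∀ l : ℝ, 0 < l → a (l • p) = l * a p)
    (hAne : {y : EuclideanSpace ℝ (Fin d) | ∀ p ∈ Pb, ⟪p, y⟫ ≤ a p}.Nonempty)
    (hpolar : ∃ u : EuclideanSpace ℝ (Fin d), u ≠ 0 ∧ ∀ p ∈ Pb, ⟪u, p⟫ ≤ 0) :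
    (∀ u ∈ Pb,
      (⨆ y ∈ {y : EuclideanSpace ℝ (Fin d) | ∀ p ∈ Pb, ⟪p, y⟫ ≤ a p},
        ((⟪u, y⟫ : ℝ) : EReal)) = (a u : EReal)) ∧
    (∀ u : EuclideanSpace ℝ (Fin d), ‖u‖ = 1 → u ∉ Pb →
      (⨆ y ∈ {y : EuclideanSpace ℝ (Fin d) | ∀ p ∈ Pb, ⟪p, y⟫ ≤ a p},
        ((⟪u, y⟫ : ℝ) : EReal)) = ⊤) :=
  stmt8_general d Pb hPbsph hCclosed hCconv a haconv hahom hAne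
end

section
/- Let d ≥ 2, let P̄ be a compact subset of S^{d−1} ∩ ℝ^d_{++} such that ⋃_{λ>0}{λp : p ∈ P̄} is convex. Let a : P̄ → ℝ be the restriction to P̄ of a convex, continuous, positively homogeneous degree-1 function, and let b : P̄ → ℝ be the restriction of a continuous, positively homogeneous degree-1 function, such that the sets A = {y : p·y ≤ a(p) for all p ∈ P̄} and B = {y : p·y ≤ b(p) for all p ∈ P̄} are nonempty. Set η = sup_{p∈P̄} |a(p) − b(p)|, r = inf_{p∈P̄} a(p), and R = sup_{p∈P̄} a(p), and assume 0 < r < R < ∞ and η < r. Then sup_{p∈P̄} |a(p) − h_B(p)| ≤ η · (R/r) · (1 + η/R)/(1 − η/r), where h_B(p) = sup_{y∈B} p·y. -/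
open scoped RealInnerProductSpace

open InnerProductSpace in
/-- A convex continuous function on an open convex subset of Euclidean space has a
subgradient at every point. -/
lemma exists_subgrad' {d : ℕ} {s : Set (EuclideanSpace ℝ (Fin d))}
    (hsc : Convex ℝ s) (hso : IsOpen s)
    {f : EuclideanSpace ℝ (Fin d) → ℝ} (hf : ConvexOn ℝ s f)
    (hfc : ContinuousOn f s) {x : EuclideanSpace ℝ (Fin d)} (hx : x ∈ s) :
    ∃ y : EuclideanSpace ℝ (Fin d), ∀ q ∈ s, ⟪y, q⟫ - f q ≤ ⟪y, x⟫ - f x := by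
  classical
  set S : Set (EuclideanSpace ℝ (Fin d) × ℝ) := {z | z.1 ∈ s ∧ f z.1 < z.2} with hS
  have hSopen : IsOpen S := by
    have hco1 : ContinuousOn (fun z : EuclideanSpace ℝ (Fin d) × ℝ => f z.1)
        (s ×ˢ (Set.univ : Set ℝ)) :=
      hfc.comp continuous_fst.continuousOn (fun z hz => hz.1)
    have hco : ContinuousOn (fun z : EuclideanSpace ℝ (Fin d) × ℝ => f z.1 - z.2)
        (s ×ˢ (Set.univ : Set ℝ)) := hco1.sub continuous_snd.continuousOn
    have hEq : S = (s ×ˢ (Set.univ : Set ℝ)) ∩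
        (fun z : EuclideanSpace ℝ (Fin d) × ℝ => f z.1 - z.2) ⁻¹' Set.Iio 0 := by
      ext z
      simp only [hS, Set.mem_setOf_eq, Set.mem_inter_iff, Set.mem_prod, Set.mem_univ,
        and_true, Set.mem_preimage, Set.mem_Iio, sub_neg]
    rw [hEq]
    exact hco.isOpen_inter_preimage (hso.prod isOpen_univ) isOpen_Iio
  have hSconv : Convex ℝ S := by
    rintro ⟨q₁, t₁⟩ ⟨hq₁, ht₁⟩ ⟨q₂, t₂⟩ ⟨hq₂, ht₂⟩ lam mu hlam hmu hlm
    refine ⟨hsc hq₁ hq₂ hlam hmu hlm, ?_⟩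
    have h1 : f (lam • q₁ + mu • q₂) ≤ lam * f q₁ + mu * f q₂ := hf.2 hq₁ hq₂ hlam hmu hlm
    have h2 : lam * f q₁ + mu * f q₂ < lam * t₁ + mu * t₂ := by
      rcases eq_or_lt_of_le hlam with h | h
      · have hmu1 : mu = 1 := by linarith
        simp only [← h, hmu1, zero_mul, one_mul, zero_add]
        exact ht₂
      · have e1 : lam * f q₁ < lam * t₁ := by nlinarith
        have e2 : mu * f q₂ ≤ mu * t₂ := by nlinarith
        linarith
    show f (lam • q₁ + mu • q₂) < lam * t₁ + mu * t₂
    linarith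
  have hxS : (x, f x) ∉ S := by simp [hS]
  obtain ⟨φ, hφ⟩ := geometric_hahn_banach_open_point hSconv hSopen hxS
  set c : ℝ := φ (0, 1) with hc
  have hsplit : ∀ (q : EuclideanSpace ℝ (Fin d)) (t : ℝ), φ (q, t) = φ (q, 0) + t * c := by
    intro q t
    have h0 : ((q, t) : EuclideanSpace ℝ (Fin d) × ℝ)
        = (q, (0:ℝ)) + t • ((0:EuclideanSpace ℝ (Fin d)), (1:ℝ)) := by
      simp [Prod.ext_iff]
    rw [h0, map_add, map_smul, smul_eq_mul, hc]
  have hcneg : c < 0 := by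
    have hmem : ((x, f x + 1) : EuclideanSpace ℝ (Fin d) × ℝ) ∈ S :=
      ⟨hx, by show f x < f x + 1; linarith⟩
    have h1 : φ (x, f x + 1) < φ (x, f x) := hφ _ hmem
    rw [hsplit x (f x + 1), hsplit x (f x)] at h1
    nlinarith
  have hcpos : 0 < -c := by linarith
  have key : ∀ q ∈ s, φ (q, 0) + f q * c ≤ φ (x, 0) + f x * c := by
    intro q hq
    refine le_of_forall_pos_le_add fun ε hε => ?_
    have hD : ε / (-c) * (-c) = ε := div_mul_cancel₀ ε (ne_of_gt hcpos)
    have hmem : ((q, f q + ε / (-c)) : EuclideanSpace ℝ (Fin d) × ℝ) ∈ S := by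
      refine ⟨hq, ?_⟩
      show f q < f q + ε / (-c)
      have : 0 < ε / (-c) := div_pos hε hcpos
      linarith
    have h1 : φ (q, f q + ε / (-c)) < φ (x, f x) := hφ _ hmem
    rw [hsplit q, hsplit x] at h1
    nlinarith [h1, hD]
  set g : EuclideanSpace ℝ (Fin d) →L[ℝ] ℝ :=
    φ.comp (ContinuousLinearMap.inl ℝ (EuclideanSpace ℝ (Fin d)) ℝ) with hg
  set v : EuclideanSpace ℝ (Fin d) := (toDual ℝ (EuclideanSpace ℝ (Fin d))).symm g with hv
  refine ⟨(-c)⁻¹ • v, fun q hq => ?_⟩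
  have hvq : ∀ w : EuclideanSpace ℝ (Fin d), ⟪(-c)⁻¹ • v, w⟫ = (-c)⁻¹ * φ (w, 0) := by
    intro w
    rw [real_inner_smul_left, hv, toDual_symm_apply]
    simp [hg]
  rw [hvq q, hvq x]
  have h2 := mul_le_mul_of_nonneg_left (key q hq) (le_of_lt (inv_pos.mpr hcpos))
  have hcne : c ≠ 0 := ne_of_lt hcneg
  have h4 : ∀ w u : ℝ, (-c)⁻¹ * (w + u * c) = (-c)⁻¹ * w - u := by
    intro w u
    field_simp
    ring
  rw [h4, h4] at h2
  exact h2

/-- Quantitative version of Lemma A.4: if `a` is (the restriction of) a convex,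
continuous, positively homogeneous degree-1 function, `b` of a continuous homogeneous
one, and `η = sup |a − b| < r = inf a` on `P̄`, then the support function `h_B` of the
set `B` induced by `b` satisfies `sup_{P̄} |a − h_B| ≤ η (R/r)(1 + η/R)/(1 − η/r)`. -/
theorem stmt10 (d : ℕ) (hd : 2 ≤ d)
    (Pb : Set (EuclideanSpace ℝ (Fin d))) (hPbcomp : IsCompact Pb)
    (hPbsph : ∀ p ∈ Pb, ‖p‖ = 1) (hPbpos : Pb ⊆ posOrthant d)
    (hcone : Convex ℝ {q : EuclideanSpace ℝ (Fin d) | ∃ l : ℝ, 0 < l ∧ ∃ p ∈ Pb, q = l • p})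
    (a b : EuclideanSpace ℝ (Fin d) → ℝ)
    (haconv : ConvexOn ℝ (posOrthant d) a) (hacont : ContinuousOn a (posOrthant d))
    (hahom : ∀ p ∈ posOrthant d, ∀ l : ℝ, 0 < l → a (l • p) = l * a p)
    (hbcont : ContinuousOn b (posOrthant d))
    (hbhom : ∀ p ∈ posOrthant d, ∀ l : ℝ, 0 < l → b (l • p) = l * b p)
    (hAne : {y : EuclideanSpace ℝ (Fin d) | ∀ p ∈ Pb, ⟪p, y⟫ ≤ a p}.Nonempty)
    (hBne : {y : EuclideanSpace ℝ (Fin d) | ∀ p ∈ Pb, ⟪p, y⟫ ≤ b p}.Nonempty)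
    (hB : EuclideanSpace ℝ (Fin d) → ℝ)
    (hhB : ∀ p ∈ Pb,
      IsLUB ((fun y => ⟪p, y⟫) '' {y : EuclideanSpace ℝ (Fin d) | ∀ q ∈ Pb, ⟪q, y⟫ ≤ b q}) (hB p))
    (eta r R : ℝ)
    (heta : eta = sSup ((fun p => |a p - b p|) '' Pb))
    (hrdef : r = sInf ((fun p => a p) '' Pb))
    (hRdef : R = sSup ((fun p => a p) '' Pb))
    (hrpos : 0 < r) (hrR : r < R) (hetar : eta < r) :
    ∀ p ∈ Pb, |a p - hB p| ≤ eta * (R / r) * ((1 + eta / R) / (1 - eta / r)) := by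
  intro p hp
  have hposopen : IsOpen (posOrthant d) := by
    have : posOrthant d = ⋂ i : Fin d, (fun q : EuclideanSpace ℝ (Fin d) => q i) ⁻¹' Set.Ioi 0 := by
      ext q; simp [posOrthant]
    rw [this]
    exact isOpen_iInter_of_finite fun i =>
      (isOpen_Ioi).preimage (EuclideanSpace.proj i).continuous
  have hposconv : Convex ℝ (posOrthant d) := by
    intro x hx y hy lam mu hlam hmu hlm i
    have hxi := hx i
    have hyi := hy i
    have : (lam • x + mu • y) i = lam * x i + mu * y i := by
      simp [smul_eq_mul]
    rw [this]
    rcases eq_or_lt_of_le hlam with h | h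
    · have hmu1 : mu = 1 := by linarith
      rw [← h, hmu1]; simpa using hyi
    · nlinarith
  have hpPos : p ∈ posOrthant d := hPbpos hp
  obtain ⟨y, hy⟩ := exists_subgrad' hposconv hposopen haconv hacont hpPos
  have hsmul_mem : ∀ l : ℝ, 0 < l → l • p ∈ posOrthant d := by
    intro l hl i
    have : (l • p) i = l * p i := rfl
    rw [this]
    exact mul_pos hl (hpPos i)
  -- ⟪y, p⟫ = a p
  have e1 := hy ((2:ℝ) • p) (hsmul_mem 2 two_pos)
  rw [hahom p hpPos 2 two_pos, real_inner_smul_right] at e1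
  have e2 := hy (((1:ℝ)/2) • p) (hsmul_mem _ (by norm_num))
  rw [hahom p hpPos _ (by norm_num), real_inner_smul_right] at e2
  have hyp : ⟪y, p⟫ = a p := by linarith
  have hyq : ∀ q ∈ Pb, ⟪q, y⟫ ≤ a q := by
    intro q hq
    have := hy q (hPbpos hq)
    rw [real_inner_comm]
    linarith [hyp ▸ this]
  -- bounds from sup/inf
  have haPb : ContinuousOn a Pb := hacont.mono hPbpos
  have hbPb : ContinuousOn b Pb := hbcont.mono hPbpos
  have hbddA : BddAbove ((fun p => a p) '' Pb) := hPbcomp.bddAbove_image haPb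
  have hbddAb : BddBelow ((fun p => a p) '' Pb) := hPbcomp.bddBelow_image haPb
  have hbddEta : BddAbove ((fun p => |a p - b p|) '' Pb) :=
    hPbcomp.bddAbove_image (haPb.sub hbPb).abs
  have hetaq : ∀ q ∈ Pb, |a q - b q| ≤ eta := fun q hq =>
    heta ▸ le_csSup hbddEta ⟨q, hq, rfl⟩
  have heta0 : 0 ≤ eta := le_trans (abs_nonneg _) (hetaq p hp)
  have hraq : ∀ q ∈ Pb, r ≤ a q := fun q hq => hrdef ▸ csInf_le hbddAb ⟨q, hq, rfl⟩
  have haR : a p ≤ R := hRdef ▸ le_csSup hbddA ⟨p, hp, rfl⟩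
  have hRpos : 0 < R := lt_trans hrpos hrR
  set t : ℝ := 1 - eta / r with htdef
  clear_value t
  have hetar' : eta / r < 1 := (div_lt_one hrpos).mpr hetar
  have ht0 : 0 < t := by rw [htdef]; linarith
  have hetarnn : 0 ≤ eta / r := div_nonneg heta0 hrpos.le
  -- t • y ∈ B
  have htyB : (t • y) ∈ {z : EuclideanSpace ℝ (Fin d) | ∀ q ∈ Pb, ⟪q, z⟫ ≤ b q} := by
    intro q hq
    rw [real_inner_smul_right]
    have h1 : ⟪q, y⟫ ≤ a q := hyq q hq
    have h2 : t * a q ≤ b q := by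
      have h3 : eta ≤ eta / r * a q := by
        have : eta / r * r ≤ eta / r * a q :=
          mul_le_mul_of_nonneg_left (hraq q hq) hetarnn
        rw [div_mul_cancel₀ eta (ne_of_gt hrpos)] at this
        exact this
      have h4 : a q - b q ≤ eta := (abs_le.mp (hetaq q hq)).2
      have h5 : t * a q = a q - eta / r * a q := by rw [htdef]; ring
      linarith [h3, h4, h5]
    calc t * ⟪q, y⟫ ≤ t * a q := mul_le_mul_of_nonneg_left h1 ht0.le
      _ ≤ b q := h2
  have hlub := hhB p hp
  have hBlow : t * a p ≤ hB p := by
    have h5 : ⟪p, t • y⟫ ≤ hB p := hlub.1 ⟨t • y, htyB, rfl⟩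
    rw [real_inner_smul_right, real_inner_comm, hyp] at h5
    exact h5
  have hBhigh : hB p ≤ b p := by
    refine hlub.2 ?_
    rintro z ⟨w, hw, rfl⟩
    exact hw p hp
  -- |a p - hB p| ≤ eta * (R / r)
  have hmain : |a p - hB p| ≤ eta * (R / r) := by
    rw [abs_le]
    constructor
    · -- -(eta*(R/r)) ≤ a p - hB p, i.e. hB p - a p ≤ eta*(R/r)
      have h6 : b p - a p ≤ eta := by
        have := (abs_le.mp (hetaq p hp)).1
        linarith
      have h7 : (1:ℝ) ≤ R / r := le_of_lt ((one_lt_div hrpos).mpr hrR)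
      nlinarith
    · -- a p - hB p ≤ eta * (R/r)
      have h8 : a p - hB p ≤ eta / r * a p := by
        have h11 : t * a p = a p - eta / r * a p := by rw [htdef]; ring
        linarith [hBlow, h11]
      have h9 : eta / r * a p ≤ eta / r * R := mul_le_mul_of_nonneg_left haR hetarnn
      have h10 : eta / r * R = eta * (R / r) := by ring
      linarith
  -- the final factor is ≥ 1
  have hfrac : (1:ℝ) ≤ (1 + eta / R) / (1 - eta / r) := by
    have ht0' : 0 < 1 - eta / r := htdef ▸ ht0
    rw [le_div_iff₀ ht0']
    have : 0 ≤ eta / R := div_nonneg heta0 hRpos.le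
    linarith
  have hnn : 0 ≤ eta * (R / r) := mul_nonneg heta0 (div_nonneg hRpos.le hrpos.le)
  have hfrac' : (1:ℝ) ≤ (1 + eta / R) / t := by rw [htdef]; exact hfrac
  calc |a p - hB p| ≤ eta * (R / r) := hmain
    _ = eta * (R / r) * 1 := by ring
    _ ≤ eta * (R / r) * ((1 + eta / R) / t) :=
        mul_le_mul_of_nonneg_left hfrac' hnn
end

section
/- Let (Ω, ℱ, μ) be a probability space, let E : Ω → ℰ be a random variable taking values in a finite set ℰ, let η : Ω → ℝ be independent of E with 𝔼[η] = 0 and |η| ≤ K/2 almost surely for some K < ∞, and let f : ℰ → ℝ. Define Π = f(E) + η. Suppose e* ∈ ℰ satisfies μ(E = e*) > 0, and suppose a ≤ b are real numbers such that [f(e*) − K/2, f(e*) + K/2] ⊆ [a, b] and, for every e ≠ e* with μ(E = e) > 0, [f(e) − K/2, f(e) + K/2] ∩ [a, b] = ∅. Then μ(a ≤ Π ≤ b) > 0 and 𝔼[Π | a ≤ Π ≤ b] = f(e*). -/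
open MeasureTheory ProbabilityTheory

/-!
Outside a null set the noise satisfies `|η| ≤ K/2` and `E` takes only values of positive
probability, so by separation `f(E) + η ∈ [a, b]` holds exactly when `E = e*`: the event
`{a ≤ Π ≤ b}` is a.e. equal to `{E = e*}`. Conditioning on `{E = e*}` freezes `f(E)` at `f(e*)`
and, by independence, leaves the law of `η` unchanged, so the conditional mean is
`f(e*) + 𝔼[η] = f(e*)`.
-/

namespace ProbabilityTheory

variable {Ω β γ : Type*} {mΩ : MeasurableSpace Ω} {μ : Measure Ω}
  [MeasurableSpace β] [MeasurableSpace γ]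

lemma cond_congr_set {s t : Set Ω} (h : s =ᵐ[μ] t) : μ[|s] = μ[|t] := by
  rw [cond, cond, measure_congr h, Measure.restrict_congr_set h]

lemma ae_measure_preimage_singleton_ne_zero [Countable β] [MeasurableSingletonClass β]
    {X : Ω → β} (hX : Measurable X) : ∀ᵐ ω ∂μ, μ (X ⁻¹' {X ω}) ≠ 0 := by
  have h : ∀ᵐ x ∂μ.map X, μ.map X {x} ≠ 0 := ae_iff_of_countable.2 fun _ hx ↦ hx
  filter_upwards [ae_of_ae_map hX.aemeasurable h] with ω hω
  rwa [Measure.map_apply hX (measurableSet_singleton _)] at hω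

lemma IndepFun.identDistrib_cond [IsFiniteMeasure μ] {X : Ω → β} {Y : Ω → γ}
    (hXY : IndepFun X Y μ) (hX : Measurable X) (hY : Measurable Y) {s : Set β}
    (hs : MeasurableSet s) (hμs : μ (X ⁻¹' s) ≠ 0) :
    IdentDistrib Y Y μ[|X ⁻¹' s] μ where
  aemeasurable_fst := hY.aemeasurable
  aemeasurable_snd := hY.aemeasurable
  map_eq := by
    ext t ht
    rw [Measure.map_apply hY ht, Measure.map_apply hY ht, cond_apply (hX hs),
      hXY.measure_inter_preimage_eq_mul _ _ hs ht, ← mul_assoc,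
      ENNReal.inv_mul_cancel hμs (measure_ne_top _ _), one_mul]

lemma IndepFun.integral_cond_preimage_singleton_add [IsFiniteMeasure μ]
    [MeasurableSingletonClass β] {X : Ω → β} {Y : Ω → ℝ} (hXY : IndepFun X Y μ)
    (hX : Measurable X) (hY : Measurable Y) (hYint : Integrable Y μ) (g : β → ℝ) {x : β}
    (hx : μ (X ⁻¹' {x}) ≠ 0) :
    ∫ ω, (g (X ω) + Y ω) ∂μ[|X ⁻¹' {x}] = g x + ∫ ω, Y ω ∂μ := by
  have hS : MeasurableSet (X ⁻¹' {x}) := hX (measurableSet_singleton x)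
  have : IsProbabilityMeasure μ[|X ⁻¹' {x}] := cond_isProbabilityMeasure hx
  have hident := hXY.identDistrib_cond hX hY (measurableSet_singleton x) hx
  have hfrozen : ∀ᵐ ω ∂μ[|X ⁻¹' {x}], g (X ω) + Y ω = g x + Y ω := by
    filter_upwards [ae_cond_mem hS] with ω hω
    rw [Set.mem_preimage.1 hω]
  rw [integral_congr_ae hfrozen, integral_add (integrable_const _) (hident.integrable_iff.2 hYint),
    integral_const, hident.integral_eq, probReal_univ, one_smul]

lemma setOf_add_mem_ae_eq_preimage_singleton [Countable β] [MeasurableSingletonClass β]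
    {X : Ω → β} {Y : Ω → ℝ} (hX : Measurable X) {r : ℝ} (hY : ∀ᵐ ω ∂μ, |Y ω| ≤ r)
    (g : β → ℝ) {T : Set ℝ} {x₀ : β} (hin : Set.Icc (g x₀ - r) (g x₀ + r) ⊆ T)
    (hout : ∀ x, x ≠ x₀ → 0 < μ (X ⁻¹' {x}) → Set.Icc (g x - r) (g x + r) ∩ T = ∅) :
    {ω | g (X ω) + Y ω ∈ T} =ᵐ[μ] X ⁻¹' {x₀} := by
  rw [Filter.eventuallyEq_set]
  filter_upwards [hY, ae_measure_preimage_singleton_ne_zero hX] with ω hYω hXω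
  have hnear : g (X ω) + Y ω ∈ Set.Icc (g (X ω) - r) (g (X ω) + r) := by
    obtain ⟨hlo, hhi⟩ := abs_le.1 hYω
    constructor <;> linarith
  refine ⟨fun hT ↦ ?_, fun hx₀ ↦ ?_⟩
  · by_contra hne
    have hempty := hout (X ω) hne (pos_iff_ne_zero.2 hXω)
    exact hempty.subset ⟨hnear, hT⟩
  · rw [Set.mem_preimage.1 hx₀] at hnear ⊢
    exact hin hnear

end ProbabilityTheory

theorem stmt13_general {Ω : Type*} [MeasurableSpace Ω] (μ : Measure Ω) [IsProbabilityMeasure μ]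
    {ℰ : Type*} [Fintype ℰ] [MeasurableSpace ℰ] [MeasurableSingletonClass ℰ]
    (E : Ω → ℰ) (hEmeas : Measurable E)
    (eta : Ω → ℝ) (hetameas : Measurable eta)
    (hindep : IndepFun E eta μ)
    (hmean : ∫ ω, eta ω ∂μ = 0)
    (K : ℝ) (hbound : ∀ᵐ ω ∂μ, |eta ω| ≤ K / 2)
    (f : ℰ → ℝ) (estar : ℰ) (hestar : 0 < μ (E ⁻¹' {estar}))
    (a b : ℝ)
    (hsep1 : Set.Icc (f estar - K / 2) (f estar + K / 2) ⊆ Set.Icc a b)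
    (hsep2 : ∀ e : ℰ, e ≠ estar → 0 < μ (E ⁻¹' {e}) →
      Set.Icc (f e - K / 2) (f e + K / 2) ∩ Set.Icc a b = ∅) :
    0 < μ {ω | f (E ω) + eta ω ∈ Set.Icc a b} ∧
    ∫ ω, (f (E ω) + eta ω) ∂(μ[|{ω | f (E ω) + eta ω ∈ Set.Icc a b}]) = f estar := by
  have hsep := setOf_add_mem_ae_eq_preimage_singleton hEmeas hbound f hsep1 hsep2
  have hetaint : Integrable eta μ :=
    .of_bound hetameas.aestronglyMeasurable (K / 2) (by simpa only [Real.norm_eq_abs] using hbound)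
  refine ⟨measure_congr hsep ▸ hestar, ?_⟩
  rw [cond_congr_set hsep,
    hindep.integral_cond_preimage_singleton_add hEmeas hetameas hetaint f hestar.ne', hmean,
    add_zero]

/-- Conditional-mean separation step in the proof of Theorem 3.1: with bounded,
mean-zero measurement error independent of the finite-valued productivity type, if the
interval `[a,b]` separates the profit of type `e*` from the profits of all other types
present, then the event `{a ≤ Π ≤ b}` has positive probability and the conditional mean
of the observed profit `Π = f(E) + η` on that event equals `f(e*)`. -/
theorem stmt13 {Ω : Type*} [MeasurableSpace Ω] (μ : Measure Ω) [IsProbabilityMeasure μ]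
    {ℰ : Type*} [Fintype ℰ] [MeasurableSpace ℰ] [MeasurableSingletonClass ℰ]
    (E : Ω → ℰ) (hEmeas : Measurable E)
    (eta : Ω → ℝ) (hetameas : Measurable eta)
    (hindep : IndepFun E eta μ)
    (hmean : ∫ ω, eta ω ∂μ = 0)
    (K : ℝ) (hbound : ∀ᵐ ω ∂μ, |eta ω| ≤ K / 2)
    (f : ℰ → ℝ) (estar : ℰ) (hestar : 0 < μ (E ⁻¹' {estar}))
    (a b : ℝ) (hab : a ≤ b)
    (hsep1 : Set.Icc (f estar - K / 2) (f estar + K / 2) ⊆ Set.Icc a b)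
    (hsep2 : ∀ e : ℰ, e ≠ estar → 0 < μ (E ⁻¹' {e}) →
      Set.Icc (f e - K / 2) (f e + K / 2) ∩ Set.Icc a b = ∅) :
    0 < μ {ω | f (E ω) + eta ω ∈ Set.Icc a b} ∧
    ∫ ω, (f (E ω) + eta ω) ∂(μ[|{ω | f (E ω) + eta ω ∈ Set.Icc a b}]) = f estar :=
  stmt13_general μ E hEmeas eta hetameas hindep hmean K hbound f estar hestar a b hsep1 hsep2
end

section
/- Let d ≥ 2, let X_j ⊆ ℝ be nonempty open intervals for j = 1,…,d and X = ∏_j X_j. Say that a differentiable function h : X → ℝ satisfies the rank condition at x_{−d} ∈ ∏_{j<d} X_j if there exist points x_{d,1},…,x_{d,d−1} ∈ X_d such that, writing x*_l = (x_{−d}, x_{d,l}), the (d−1)×(d−1) matrix with (l, j) entry ∂_{x_j} h(x*_l), j = 1,…,d−1, is nonsingular. Suppose π, π̂ : ℝ^d_{++} → ℝ are differentiable and positively homogeneous of degree 1; g_j, ĝ_j : X_j → ℝ_{++} are differentiable with nowhere-vanishing derivatives; g_d and ĝ_d are the identity (g_d(x) = ĝ_d(x) = x); there exists x₀ ∈ X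 with g(x₀) = ĝ(x₀); and π(g(x)) = π̂(ĝ(x)) =: π̃(x) for all x ∈ X, where π̃ satisfies the rank condition at every x_{−d} ∈ ∏_{j<d} X_j. Then g_j = ĝ_j on X_j for every j = 1,…,d. -/
/-- The rank condition of Definition 4.1 for a differentiable function
`h : ℝ^{d+1} → ℝ` at a point `xm ∈ ∏_{j < d} X_j`: there are `d` values of the last
coordinate at which the matrix of partial derivatives with respect to the first `d`
coordinates is nonsingular. -/
def ProxyRankCondition (d : ℕ) (X : Set (Fin (d + 1) → ℝ)) (h : (Fin (d + 1) → ℝ) → ℝ)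
    (xm : Fin d → ℝ) : Prop :=
  ∃ xd : Fin d → ℝ, (∀ l : Fin d, (Fin.snoc xm (xd l) : Fin (d + 1) → ℝ) ∈ X) ∧
    (Matrix.of fun l j : Fin d =>
        fderiv ℝ h (Fin.snoc xm (xd l)) (Pi.single (Fin.castSucc j) 1)).det ≠ 0

/-!
Differentiating `π̃ = π ∘ g` and applying Euler's identity `Dπ(p) p = π(p)` gives
`∑ⱼ ∂ⱼπ̃(x) · gⱼ(xⱼ)/gⱼ'(xⱼ) = π̃(x)`, and likewise for `ĝ`. Subtracting, the differences
`gⱼ/gⱼ' - ĝⱼ/ĝⱼ'` (the last of which vanishes, as `g_d = ĝ_d = id`) lie in the kernel of the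
rank-condition matrix, hence vanish. So `gⱼ` and `ĝⱼ` have the same logarithmic derivative on
the interval `Xⱼ`, are therefore proportional there, and agreeing at `x₀` they are equal.
-/

open Filter Set Topology

theorem fderiv_apply_self_of_homogeneous {E F : Type*} [NormedAddCommGroup E] [NormedSpace ℝ E]
    [NormedAddCommGroup F] [NormedSpace ℝ F] {f : E → F} {p : E}
    (hf : DifferentiableAt ℝ f p) (hhom : ∀ l : ℝ, 0 < l → f (l • p) = l • f p) :
    fderiv ℝ f p p = f p := by
  have hray : HasDerivAt (fun l : ℝ => f (l • p)) (fderiv ℝ f p p) 1 := by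
    have hsmul : HasDerivAt (fun l : ℝ => l • p) p 1 := by
      simpa using (hasDerivAt_id (1 : ℝ)).smul_const p
    exact hf.hasFDerivAt.comp_hasDerivAt_of_eq 1 hsmul (one_smul ℝ p).symm
  have hlin : HasDerivAt (fun l : ℝ => f (l • p)) (f p) 1 := by
    refine ((hasDerivAt_id (1 : ℝ)).smul_const (f p)).congr_of_eventuallyEq ?_ |>.congr_deriv
      (one_smul ℝ _)
    filter_upwards [Ioi_mem_nhds one_pos] with l hl
    exact hhom l hl
  exact hray.unique hlin

theorem ContinuousLinearMap.apply_eq_sum_mul_apply_single {ι : Type*} [Fintype ι]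
    [DecidableEq ι] (L : (ι → ℝ) →L[ℝ] ℝ) (p : ι → ℝ) :
    L p = ∑ i, L (Pi.single i 1) * p i := by
  conv_lhs => rw [pi_eq_sum_univ' p]
  simp [map_sum, mul_comm]

section Coordinatewise

variable {ι : Type*} [Fintype ι] [DecidableEq ι] {f : (ι → ℝ) → ℝ} {g : ι → ℝ → ℝ}
  {x : ι → ℝ}

theorem fderiv_comp_coordwise_apply_single (hg : ∀ i, DifferentiableAt ℝ (g i) (x i))
    (hf : DifferentiableAt ℝ f (fun i => g i (x i))) (i : ι) :
    fderiv ℝ (fun y => f (fun j => g j (y j))) x (Pi.single i 1)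
      = deriv (g i) (x i) * fderiv ℝ f (fun j => g j (x j)) (Pi.single i 1) := by
  have hinner : HasFDerivAt (fun y : ι → ℝ => fun j => g j (y j))
      (ContinuousLinearMap.pi fun j => deriv (g j) (x j) •
        (ContinuousLinearMap.proj j : (ι → ℝ) →L[ℝ] ℝ)) x :=
    hasFDerivAt_pi.2 fun j => (hg j).hasDerivAt.comp_hasFDerivAt x (hasFDerivAt_apply j x)
  have hdir : (ContinuousLinearMap.pi fun j => deriv (g j) (x j) •
      (ContinuousLinearMap.proj j : (ι → ℝ) →L[ℝ] ℝ))
      (Pi.single i (1 : ℝ)) = deriv (g i) (x i) • Pi.single i 1 := by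
    ext k
    by_cases hk : k = i <;> simp [hk]
  have hcomp : HasFDerivAt (fun y => f fun j => g j (y j)) _ x := hf.hasFDerivAt.comp x hinner
  rw [hcomp.fderiv, ContinuousLinearMap.comp_apply, hdir, map_smul, smul_eq_mul]

theorem sum_fderiv_comp_coordwise_mul_inv_logDeriv (hg : ∀ i, DifferentiableAt ℝ (g i) (x i))
    (hg' : ∀ i, deriv (g i) (x i) ≠ 0) (hf : DifferentiableAt ℝ f (fun i => g i (x i)))
    (hhom : ∀ l : ℝ, 0 < l → f (l • fun i => g i (x i)) = l * f (fun i => g i (x i))) :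
    ∑ i, fderiv ℝ (fun y => f (fun j => g j (y j))) x (Pi.single i 1)
        * (logDeriv (g i) (x i))⁻¹ = f (fun i => g i (x i)) := by
  calc _ = ∑ i, fderiv ℝ f (fun j => g j (x j)) (Pi.single i 1) * g i (x i) := by
        refine Finset.sum_congr rfl fun i _ => ?_
        rw [fderiv_comp_coordwise_apply_single hg hf, logDeriv_apply, inv_div]
        field_simp [hg' i]
    _ = fderiv ℝ f (fun j => g j (x j)) (fun j => g j (x j)) :=
        (ContinuousLinearMap.apply_eq_sum_mul_apply_single _ _).symm
    _ = f (fun i => g i (x i)) := fderiv_apply_self_of_homogeneous hf hhom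

theorem sum_fderiv_comp_coordwise_mul_sub_eq_zero {fhat : (ι → ℝ) → ℝ} {ghat : ι → ℝ → ℝ}
    (hg : ∀ i, DifferentiableAt ℝ (g i) (x i)) (hg' : ∀ i, deriv (g i) (x i) ≠ 0)
    (hf : DifferentiableAt ℝ f (fun i => g i (x i)))
    (hhom : ∀ l : ℝ, 0 < l → f (l • fun i => g i (x i)) = l * f (fun i => g i (x i)))
    (hghat : ∀ i, DifferentiableAt ℝ (ghat i) (x i)) (hghat' : ∀ i, deriv (ghat i) (x i) ≠ 0)
    (hfhat : DifferentiableAt ℝ fhat (fun i => ghat i (x i)))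
    (hhomhat : ∀ l : ℝ, 0 < l →
      fhat (l • fun i => ghat i (x i)) = l * fhat (fun i => ghat i (x i)))
    (hsame : (fun y => f fun j => g j (y j)) =ᶠ[𝓝 x] fun y => fhat fun j => ghat j (y j)) :
    ∑ i, fderiv ℝ (fun y => f fun j => g j (y j)) x (Pi.single i 1)
        * ((logDeriv (g i) (x i))⁻¹ - (logDeriv (ghat i) (x i))⁻¹) = 0 := by
  simp only [mul_sub, Finset.sum_sub_distrib]
  rw [sum_fderiv_comp_coordwise_mul_inv_logDeriv hg hg' hf hhom, hsame.fderiv_eq,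
    sum_fderiv_comp_coordwise_mul_inv_logDeriv hghat hghat' hfhat hhomhat]
  exact sub_eq_zero.2 hsame.eq_of_nhds

end Coordinatewise

theorem ProxyRankCondition.eq_zero_of_sum_fderiv_mul_eq_zero {d : ℕ}
    {X : Set (Fin (d + 1) → ℝ)} {h : (Fin (d + 1) → ℝ) → ℝ} {xm : Fin d → ℝ}
    (hrank : ProxyRankCondition d X h xm) {c : Fin (d + 1) → ℝ → ℝ}
    (hsum : ∀ x ∈ X, ∑ i, fderiv ℝ h x (Pi.single i 1) * c i (x i) = 0)
    (hlast : ∀ x ∈ X, c (Fin.last d) (x (Fin.last d)) = 0) (j : Fin d) :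
    c j.castSucc (xm j) = 0 := by
  obtain ⟨xd, hmem, hdet⟩ := hrank
  suffices hc : (fun i => c i.castSucc (xm i)) = 0 from congrFun hc j
  refine Matrix.eq_zero_of_mulVec_eq_zero hdet (funext fun l => ?_)
  have hl := hsum _ (hmem l)
  rw [Fin.sum_univ_castSucc, hlast _ (hmem l), mul_zero, add_zero] at hl
  simpa [Matrix.mulVec, dotProduct] using hl

theorem eqOn_of_logDeriv_eqOn {𝕜 𝕜' : Type*} [NontriviallyNormedField 𝕜] [IsRCLikeNormedField 𝕜]
    [NontriviallyNormedField 𝕜'] [NormedAlgebra 𝕜 𝕜'] {f g : 𝕜 → 𝕜'} {s : Set 𝕜} {x₀ : 𝕜}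
    (hs : IsOpen s) (hs' : IsPreconnected s) (hf : DifferentiableOn 𝕜 f s)
    (hg : DifferentiableOn 𝕜 g s) (hf0 : ∀ x ∈ s, f x ≠ 0) (hg0 : ∀ x ∈ s, g x ≠ 0)
    (hfg : EqOn (logDeriv f) (logDeriv g) s) (hx₀ : x₀ ∈ s) (hfgx₀ : f x₀ = g x₀) :
    EqOn f g s := by
  obtain ⟨z, -, hz⟩ := (logDeriv_eqOn_iff hf hg hs hs' hg0 hf0).1 hfg
  have hz1 : z = 1 := by
    have h := hz hx₀
    rw [hfgx₀, Pi.smul_apply, smul_eq_mul] at h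
    exact (mul_eq_right₀ (hg0 x₀ hx₀)).1 h.symm
  intro x hx
  simpa [hz1] using hz hx

theorem eq_zero_of_forall_proxyRankCondition {d : ℕ} {Xs : Fin (d + 1) → Set ℝ}
    {h : (Fin (d + 1) → ℝ) → ℝ} {c : Fin (d + 1) → ℝ → ℝ} {x0 : Fin (d + 1) → ℝ}
    (hx0 : ∀ j, x0 j ∈ Xs j)
    (hrank : ∀ xm : Fin d → ℝ, (∀ j, xm j ∈ Xs j.castSucc) →
      ProxyRankCondition d {x | ∀ j, x j ∈ Xs j} h xm)
    (hsum : ∀ x ∈ {x : Fin (d + 1) → ℝ | ∀ j, x j ∈ Xs j},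
      ∑ i, fderiv ℝ h x (Pi.single i 1) * c i (x i) = 0)
    (hlast : ∀ t ∈ Xs (Fin.last d), c (Fin.last d) t = 0) :
    ∀ j, ∀ t ∈ Xs j, c j t = 0 := by
  intro j
  induction j using Fin.lastCases with
  | last => exact hlast
  | cast j =>
    intro t ht
    have hxm : ∀ i : Fin d, Function.update (fun i => x0 i.castSucc) j t i ∈ Xs i.castSucc :=
      Function.forall_update_iff _ (p := fun i y => y ∈ Xs (Fin.castSucc i)) |>.2
        ⟨ht, fun i _ => hx0 _⟩
    simpa using (hrank _ hxm).eq_zero_of_sum_fderiv_mul_eq_zero hsum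
      (fun x hx => hlast _ (hx _)) j

theorem stmt16_general (d : ℕ)
    (prof profhat : (Fin (d + 1) → ℝ) → ℝ)
    (hprofdiff : ∀ p : Fin (d + 1) → ℝ, (∀ i, 0 < p i) → DifferentiableAt ℝ prof p)
    (hprofhatdiff : ∀ p : Fin (d + 1) → ℝ, (∀ i, 0 < p i) → DifferentiableAt ℝ profhat p)
    (hprofhom : ∀ p : Fin (d + 1) → ℝ, (∀ i, 0 < p i) → ∀ l : ℝ, 0 < l →
      prof (l • p) = l * prof p)
    (hprofhathom : ∀ p : Fin (d + 1) → ℝ, (∀ i, 0 < p i) → ∀ l : ℝ, 0 < l →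
      profhat (l • p) = l * profhat p)
    (Xs : Fin (d + 1) → Set ℝ)
    (hXopen : ∀ j, IsOpen (Xs j)) (hXint : ∀ j, ∃ c c' : ℝ, Xs j = Set.Ioo c c')
    (g ghat : Fin (d + 1) → ℝ → ℝ)
    (hgdiff : ∀ j, ∀ x ∈ Xs j, DifferentiableAt ℝ (g j) x)
    (hghatdiff : ∀ j, ∀ x ∈ Xs j, DifferentiableAt ℝ (ghat j) x)
    (hgpos : ∀ j, ∀ x ∈ Xs j, 0 < g j x)
    (hghatpos : ∀ j, ∀ x ∈ Xs j, 0 < ghat j x)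
    (hgderiv : ∀ j, ∀ x ∈ Xs j, deriv (g j) x ≠ 0)
    (hghatderiv : ∀ j, ∀ x ∈ Xs j, deriv (ghat j) x ≠ 0)
    (hlast : ∀ x ∈ Xs (Fin.last d), g (Fin.last d) x = x ∧ ghat (Fin.last d) x = x)
    (x0 : Fin (d + 1) → ℝ) (hx0 : ∀ j, x0 j ∈ Xs j)
    (hx0eq : ∀ j, g j (x0 j) = ghat j (x0 j))
    (hsame : ∀ x : Fin (d + 1) → ℝ, (∀ j, x j ∈ Xs j) →
      prof (fun j => g j (x j)) = profhat (fun j => ghat j (x j)))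
    (hrank : ∀ xm : Fin d → ℝ, (∀ j : Fin d, xm j ∈ Xs (Fin.castSucc j)) →
      ProxyRankCondition d {x : Fin (d + 1) → ℝ | ∀ j, x j ∈ Xs j}
        (fun x => prof (fun j => g j (x j))) xm) :
    ∀ j, ∀ x ∈ Xs j, g j x = ghat j x := by
  have hX : IsOpen {x : Fin (d + 1) → ℝ | ∀ j, x j ∈ Xs j} := by
    simpa [Set.pi] using isOpen_set_pi finite_univ fun j _ => hXopen j
  have hsum : ∀ x ∈ {x : Fin (d + 1) → ℝ | ∀ j, x j ∈ Xs j},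
      ∑ i, fderiv ℝ (fun y => prof fun j => g j (y j)) x (Pi.single i 1)
        * ((logDeriv (g i) (x i))⁻¹ - (logDeriv (ghat i) (x i))⁻¹) = 0 := fun x hx =>
    sum_fderiv_comp_coordwise_mul_sub_eq_zero (fun i => hgdiff i _ (hx i))
      (fun i => hgderiv i _ (hx i)) (hprofdiff _ fun i => hgpos i _ (hx i))
      (hprofhom _ fun i => hgpos i _ (hx i)) (fun i => hghatdiff i _ (hx i))
      (fun i => hghatderiv i _ (hx i)) (hprofhatdiff _ fun i => hghatpos i _ (hx i))
      (hprofhathom _ fun i => hghatpos i _ (hx i)) (eventually_of_mem (hX.mem_nhds hx) hsame)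
  have hldlast : EqOn (logDeriv (g (Fin.last d))) (logDeriv (ghat (Fin.last d)))
      (Xs (Fin.last d)) := fun t ht =>
    (logDeriv_congr_nhds <| eventually_of_mem ((hXopen _).mem_nhds ht)
      fun s hs => (hlast s hs).1.trans (hlast s hs).2.symm).eq_of_nhds
  have hld : ∀ j, EqOn (logDeriv (g j)) (logDeriv (ghat j)) (Xs j) := fun j t ht =>
    inv_inj.1 <| sub_eq_zero.1 <| eq_zero_of_forall_proxyRankCondition
      (c := fun i t => (logDeriv (g i) t)⁻¹ - (logDeriv (ghat i) t)⁻¹) hx0 hrank hsum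
      (fun t ht => sub_eq_zero.2 (congrArg _ (hldlast ht))) j t ht
  intro j
  obtain ⟨a, b, hab⟩ := hXint j
  exact eqOn_of_logDeriv_eqOn (hXopen j) (hab ▸ isPreconnected_Ioo)
    (fun t ht => (hgdiff j t ht).differentiableWithinAt)
    (fun t ht => (hghatdiff j t ht).differentiableWithinAt) (fun t ht => (hgpos j t ht).ne')
    (fun t ht => (hghatpos j t ht).ne') (hld j) (hx0 j) (hx0eq j)

/-- Theorem 4.1(i): identification of the price-proxy functions. If two collections of
proxy functions `g`, `ĝ` (differentiable, strictly positive, with nowhere-vanishing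
derivatives, the last one being the identity—the observed price) generate the same
composite profit function `π̃(x) = π(g(x)) = π̂(ĝ(x))` for degree-1 homogeneous
differentiable profit functions, agree at one point, and `π̃` satisfies the rank
condition everywhere, then `g_j = ĝ_j` on `X_j` for every `j`. -/
theorem stmt16 (d : ℕ) (hd : 1 ≤ d)
    (prof profhat : (Fin (d + 1) → ℝ) → ℝ)
    (hprofdiff : ∀ p : Fin (d + 1) → ℝ, (∀ i, 0 < p i) → DifferentiableAt ℝ prof p)
    (hprofhatdiff : ∀ p : Fin (d + 1) → ℝ, (∀ i, 0 < p i) → DifferentiableAt ℝ profhat p)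
    (hprofhom : ∀ p : Fin (d + 1) → ℝ, (∀ i, 0 < p i) → ∀ l : ℝ, 0 < l →
      prof (l • p) = l * prof p)
    (hprofhathom : ∀ p : Fin (d + 1) → ℝ, (∀ i, 0 < p i) → ∀ l : ℝ, 0 < l →
      profhat (l • p) = l * profhat p)
    (Xs : Fin (d + 1) → Set ℝ) (hXne : ∀ j, (Xs j).Nonempty)
    (hXopen : ∀ j, IsOpen (Xs j)) (hXint : ∀ j, ∃ c c' : ℝ, Xs j = Set.Ioo c c')
    (g ghat : Fin (d + 1) → ℝ → ℝ)
    (hgdiff : ∀ j, ∀ x ∈ Xs j, DifferentiableAt ℝ (g j) x)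
    (hghatdiff : ∀ j, ∀ x ∈ Xs j, DifferentiableAt ℝ (ghat j) x)
    (hgpos : ∀ j, ∀ x ∈ Xs j, 0 < g j x)
    (hghatpos : ∀ j, ∀ x ∈ Xs j, 0 < ghat j x)
    (hgderiv : ∀ j, ∀ x ∈ Xs j, deriv (g j) x ≠ 0)
    (hghatderiv : ∀ j, ∀ x ∈ Xs j, deriv (ghat j) x ≠ 0)
    (hlast : ∀ x ∈ Xs (Fin.last d), g (Fin.last d) x = x ∧ ghat (Fin.last d) x = x)
    (x0 : Fin (d + 1) → ℝ) (hx0 : ∀ j, x0 j ∈ Xs j)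
    (hx0eq : ∀ j, g j (x0 j) = ghat j (x0 j))
    (hsame : ∀ x : Fin (d + 1) → ℝ, (∀ j, x j ∈ Xs j) →
      prof (fun j => g j (x j)) = profhat (fun j => ghat j (x j)))
    (hrank : ∀ xm : Fin d → ℝ, (∀ j : Fin d, xm j ∈ Xs (Fin.castSucc j)) →
      ProxyRankCondition d {x : Fin (d + 1) → ℝ | ∀ j, x j ∈ Xs j}
        (fun x => prof (fun j => g j (x j))) xm) :
    ∀ j, ∀ x ∈ Xs j, g j x = ghat j x :=
  stmt16_general d prof profhat hprofdiff hprofhatdiff hprofhom hprofhathom Xs hXopen hXint g ghat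
    hgdiff hghatdiff hgpos hghatpos hgderiv hghatderiv hlast x0 hx0 hx0eq hsame hrank
end
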